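/- arXiv:2504.04876 — 5 statements merged into one kernel-verified Lean document; each statement's English description precedes it below -/
import Mathlib

section
/- An abelian group G is hereditarily co-Bassian (every subgroup of G is co-Bassian) if and only if G is a torsion group and, for each prime p, the p-primary component T_p of G is finitely cogenerated, i.e., T_p[p] = {x ∈ T_p : p·x = 0} is finite. -/
open scoped TensorProduct DirectSum

/-- An abelian group is divisible if every element is divisible by every positive integer. -/
def IsDivisibleGrp (G : Type*) [AddCommGroup G] : Prop :=
  ∀ n : ℕ, 0 < n → ∀ d : G, ∃ x : G, n • x = d

/-- An abelian group `G` is co-Bassian if for every subgroup `N`, every injective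
homomorphism `G → G/N` is surjective. -/
def IsCoBassian (G : Type*) [AddCommGroup G] : Prop :=
  ∀ N : AddSubgroup G, ∀ φ : G →+ G ⧸ N, Function.Injective φ → Function.Surjective φ

/-- A subgroup `A` of an abelian group is a direct summand if it has a complement. -/
def IsDirectSummand {G : Type*} [AddCommGroup G] (A : AddSubgroup G) : Prop :=
  ∃ C : AddSubgroup G, A ⊔ C = ⊤ ∧ A ⊓ C = ⊥

/-- An abelian group `G` is generalized co-Bassian if for every subgroup `N` and every
injective homomorphism `φ : G → G/N`, the image of `φ` is a direct summand of `G/N`. -/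
def IsGenCoBassian (G : Type*) [AddCommGroup G] : Prop :=
  ∀ N : AddSubgroup G, ∀ φ : G →+ G ⧸ N, Function.Injective φ → IsDirectSummand φ.range

/-!
Co-Bassian groups are co-Hopfian (take `N = ⊥`), while `ℤ` and every infinite elementary abelian
`p`-group (an infinite-dimensional `𝔽_p`-space) have injective, non-surjective endomorphisms; this
gives the forward direction. Conversely, let `H` be torsion with every `H[m]` finite. For any
quotient, `|(H/N)[m]| ≤ |H[m]|`: for finite groups because `|X[m]| = [X : mX]` and `mX` maps onto
`m(X/N)`, in general by lifting finitely many elements into a finite subgroup. Hence an injective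
`φ : H → H/N` maps `H[m]` onto `(H/N)[m]`, and every element of `H/N` lies in some `(H/N)[m]`.
-/

open Function

section

variable {A Z : Type*} [AddCommGroup A] [AddCommGroup Z]

theorem IsCoBassian.surjective_of_injective (hA : IsCoBassian A) {f : A →+ A}
    (hf : Injective f) : Surjective f := by
  let e : A ⧸ (⊥ : AddSubgroup A) ≃+ A := QuotientAddGroup.quotientBot
  have := hA ⊥ (e.symm.toAddMonoidHom.comp f) (e.symm.injective.comp hf)
  exact (EquivLike.comp_surjective _ e.symm).mp this

theorem not_isCoBassian_of_addEquiv_int (e : ℤ ≃+ A) : ¬IsCoBassian A := by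
  intro hA
  let f : A →+ A := e.toAddMonoidHom.comp ((nsmulAddMonoidHom 2).comp e.symm.toAddMonoidHom)
  have hf : Injective f :=
    e.injective.comp ((nsmul_right_injective two_ne_zero).comp e.symm.injective)
  obtain ⟨a, ha⟩ := hA.surjective_of_injective hf (e 1)
  have : 2 * e.symm a = 1 := by simpa using e.injective ha
  omega

theorem not_isCoBassian_of_infinite_module (K V : Type*) [DivisionRing K] [Finite K]
    [AddCommGroup V] [Module K V] [Infinite V] : ¬IsCoBassian V := by
  intro hV
  have hrank : Cardinal.aleph0 ≤ Module.rank K V := by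
    by_contra! h
    have := Module.rank_lt_aleph0_iff.mp h
    have := Module.finite_of_finite K (M := V)
    exact not_finite V
  let e : (V × V) ≃ₗ[K] V :=
    LinearEquiv.ofRankEq _ _ (by rw [rank_prod', Cardinal.add_eq_self hrank])
  obtain ⟨v, hv⟩ := exists_ne (0 : V)
  let f : V →+ V := (e.toLinearMap ∘ₗ LinearMap.inl K V V).toAddMonoidHom
  obtain ⟨w, hw⟩ :=
    hV.surjective_of_injective (f := f) (e.injective.comp LinearMap.inl_injective) (e (0, v))
  exact hv (congrArg Prod.snd (e.injective hw)).symm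

theorem isAddTorsion_of_forall_isCoBassian (h : ∀ H : AddSubgroup A, IsCoBassian H) :
    IsAddTorsion A := by
  intro x
  by_contra hx
  have hinj : Injective (zmultiplesHom A x) := injective_zsmul_iff_not_isOfFinAddOrder.mpr hx
  exact not_isCoBassian_of_addEquiv_int (AddMonoidHom.ofInjective hinj) (h _)

theorem finite_nsmul_eq_zero_of_forall_isCoBassian (h : ∀ H : AddSubgroup A, IsCoBassian H)
    (p : ℕ) [Fact p.Prime] : {x : A | p • x = 0}.Finite := by
  by_contra hinf
  let V := (nsmulAddMonoidHom p : A →+ A).ker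
  have : Infinite V := Set.infinite_coe_iff.mpr hinf
  let : Module (ZMod p) V := AddCommGroup.zmodModule fun x => Subtype.ext x.2
  exact not_isCoBassian_of_infinite_module (ZMod p) V (h V)

theorem finite_nsmul_eq_zero_mul {a b : ℕ} (ha : {x : A | a • x = 0}.Finite)
    (hb : {x : A | b • x = 0}.Finite) : {x : A | (a * b) • x = 0}.Finite := by
  refine Set.Finite.of_finite_fibers (b • ·) (ha.subset ?_) ?_
  · rintro _ ⟨x, hx, rfl⟩
    simpa [mul_smul] using hx
  · rintro _ ⟨x₀, -, rfl⟩
    refine (hb.image (x₀ + ·)).subset ?_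
    rintro x ⟨-, hx⟩
    exact ⟨x - x₀, by simp_all [smul_sub], add_sub_cancel x₀ x⟩

theorem finite_nsmul_eq_zero_of_forall_prime
    (h : ∀ p : ℕ, p.Prime → {x : A | p • x = 0}.Finite) {m : ℕ} (hm : m ≠ 0) :
    {x : A | m • x = 0}.Finite := by
  induction m using Nat.recOnMul with
  | zero => contradiction
  | one => simp
  | prime p hp => exact h p hp
  | mul a b iha ihb =>
    exact finite_nsmul_eq_zero_mul (iha (left_ne_zero_of_mul hm)) (ihb (right_ne_zero_of_mul hm))

theorem card_ker_nsmul_le_of_surjective [Finite A] {f : A →+ Z} (hf : Surjective f) (m : ℕ) :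
    Nat.card (nsmulAddMonoidHom m : Z →+ Z).ker ≤ Nat.card (nsmulAddMonoidHom m : A →+ A).ker := by
  have : Finite Z := Finite.of_surjective f hf
  have hrange : (nsmulAddMonoidHom m : Z →+ Z).range =
      (nsmulAddMonoidHom m : A →+ A).range.map f := by
    rw [AddMonoidHom.map_range,
      show f.comp (nsmulAddMonoidHom m) = (nsmulAddMonoidHom m).comp f by ext; simp,
      AddMonoidHom.range_comp, f.range_eq_top_of_surjective hf, ← AddMonoidHom.range_eq_map]
  rw [← AddSubgroup.index_range, ← AddSubgroup.index_range, hrange]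
  exact Nat.le_of_dvd (Nat.pos_of_ne_zero AddSubgroup.index_ne_zero_of_finite)
    (AddSubgroup.index_map_dvd _ hf)

theorem Set.encard_le_of_forall_finite_subset {α : Type*} {s : Set α} {k : ℕ∞}
    (h : ∀ t ⊆ s, t.Finite → t.encard ≤ k) : s.encard ≤ k := by
  by_contra! hlt
  have hk : k ≠ ⊤ := hlt.ne_top
  obtain ⟨t, hts, ht⟩ := Set.exists_subset_encard_eq (Order.add_one_le_of_lt hlt)
  have htk := h t hts (Set.encard_ne_top_iff.mp (by simp [ht, hk]))
  rw [ht, ENat.add_one_le_iff hk] at htk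
  exact htk.false

theorem encard_nsmul_eq_zero_le_of_surjective (hA : IsAddTorsion A) {f : A →+ Z}
    (hf : Surjective f) (m : ℕ) : {z : Z | m • z = 0}.encard ≤ {x : A | m • x = 0}.encard := by
  refine Set.encard_le_of_forall_finite_subset fun t ht htfin => ?_
  have : Finite t := htfin.to_subtype
  let F := AddSubgroup.closure (surjInv hf '' t)
  have : Finite F := AddCommGroup.finite_of_fg_isAddTorsion F (hA.addSubgroup F)
  let T := F.map f
  have : Finite T := Finite.of_surjective _ (f.addSubgroupMap_surjective F)
  calc t.encard = ENat.card t := rfl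
    _ ≤ ENat.card (nsmulAddMonoidHom m : T →+ T).ker := by
      refine ENat.card_le_card_of_injective (f := fun z => ⟨⟨z, surjInv hf z,
        AddSubgroup.subset_closure ⟨z, z.2, rfl⟩, surjInv_eq hf z⟩, Subtype.ext (ht z.2)⟩) ?_
      intro z w hzw
      exact Subtype.ext (congrArg (fun u => (u.1.1 : Z)) hzw)
    _ ≤ ENat.card (nsmulAddMonoidHom m : F →+ F).ker := by
      rw [ENat.card_eq_coe_natCard, ENat.card_eq_coe_natCard]
      exact_mod_cast card_ker_nsmul_le_of_surjective (f.addSubgroupMap_surjective F) m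
    _ ≤ ENat.card {x : A | m • x = 0} := by
      refine ENat.card_le_card_of_injective (f := fun x => ⟨x.1.1, congrArg Subtype.val x.2⟩) ?_
      intro x y hxy
      exact Subtype.ext (Subtype.ext (by simpa using congrArg Subtype.val hxy))
    _ = {x : A | m • x = 0}.encard := rfl

theorem IsCoBassian.of_isAddTorsion (hA : IsAddTorsion A)
    (hfin : ∀ m ≠ 0, {x : A | m • x = 0}.Finite) : IsCoBassian A := by
  intro N φ hφ y
  obtain ⟨a, rfl⟩ := QuotientAddGroup.mk_surjective y
  set m := addOrderOf a
  have hsA : {x : A | m • x = 0}.Finite := hfin m (hA a).addOrderOf_pos.ne'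
  have hmaps : φ '' {x : A | m • x = 0} ⊆ {q : A ⧸ N | m • q = 0} := by
    rintro _ ⟨x, hx, rfl⟩
    simp_all [← map_nsmul]
  have himage : φ '' {x : A | m • x = 0} = {q : A ⧸ N | m • q = 0} :=
    (hsA.image φ).eq_of_subset_of_encard_le hmaps <| by
      rw [hφ.injOn.encard_image]
      exact encard_nsmul_eq_zero_le_of_surjective hA (QuotientAddGroup.mk'_surjective N) m
  obtain ⟨x, -, hx⟩ := himage.symm.subset (show m • (a : A ⧸ N) = 0 by
    rw [← QuotientAddGroup.mk_nsmul, addOrderOf_nsmul_eq_zero, QuotientAddGroup.mk_zero])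
  exact ⟨x, hx⟩

theorem setOf_mem_primaryComponent_and_nsmul_eq_zero (p : ℕ) :
    {x : A | x ∈ AddCommGroup.primaryComponent A p ∧ p • x = 0} = {x : A | p • x = 0} :=
  Set.ext fun _ => and_iff_right_of_imp fun hx =>
    AddCommGroup.mem_primaryComponent.mpr ⟨1, by simpa using hx⟩

end

/-- `G` is hereditarily co-Bassian iff `G` is torsion and each primary
component `T_p` is finitely cogenerated, i.e. `T_p[p]` is finite. -/
theorem hereditarilyCoBassian_iff (G : Type*) [AddCommGroup G] :
    (∀ H : AddSubgroup G, IsCoBassian H) ↔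
      (AddMonoid.IsTorsion G ∧
        ∀ (p : ℕ) [Fact p.Prime],
          {x : G | x ∈ AddCommGroup.primaryComponent G p ∧ p • x = 0}.Finite) := by
  simp only [setOf_mem_primaryComponent_and_nsmul_eq_zero]
  refine ⟨fun h => ⟨isAddTorsion_of_forall_isCoBassian h,
    fun p _ => finite_nsmul_eq_zero_of_forall_isCoBassian h p⟩, ?_⟩
  rintro ⟨htors, hfin⟩ H
  refine IsCoBassian.of_isAddTorsion (htors.addSubgroup H) fun m hm => ?_
  have hfinG := finite_nsmul_eq_zero_of_forall_prime (fun p hp => haveI := Fact.mk hp; hfin p) hm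
  exact (hfinG.preimage Subtype.val_injective.injOn).subset fun x hx => by
    simpa using congrArg Subtype.val hx
end

section
/- An abelian group G is a torsion group with finitely cogenerated p-primary components for all primes p (i.e., T_p[p] is finite for every prime p) if and only if G has no subgroup isomorphic to ℤ and, for every prime p, no subgroup isomorphic to the countably infinite direct sum ⨁_{n ∈ ℕ} ℤ/pℤ. -/
open scoped TensorProduct DirectSum

/-!
A non-torsion element generates a copy of `ℤ`, and `ℤ` is torsion-free. The elements of `G`
killed by `p` (which form `T_p[p]`) are a vector space over `ZMod p`; when it is infinite its
basis is infinite, and a countable part of the basis spans a copy of `⨁ ℕ, ZMod p`. Conversely a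
copy of `⨁ ℕ, ZMod p` is an infinite subgroup killed by `p`.
-/

theorem Module.exists_injective_finsupp_nat_of_not_finite {K V : Type*} [DivisionRing K]
    [AddCommGroup V] [Module K V] (h : ¬Module.Finite K V) :
    ∃ f : (ℕ →₀ K) →ₗ[K] V, Function.Injective f := by
  let b := Module.Basis.ofVectorSpace K V
  have : Infinite (Module.Basis.ofVectorSpaceIndex K V) := by
    rw [← not_finite_iff_infinite]
    exact fun _ ↦ h (Module.Finite.of_basis b)
  let e := Infinite.natEmbedding (Module.Basis.ofVectorSpaceIndex K V)
  exact ⟨Finsupp.linearCombination K (b ∘ e), b.linearIndependent.comp e e.injective⟩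

theorem exists_injective_directSum_zmod_of_nsmul_eq_zero (p : ℕ) [Fact p.Prime]
    {V : Type*} [AddCommGroup V] [Infinite V] (hV : ∀ x : V, p • x = 0) :
    ∃ f : (⨁ _ : ℕ, ZMod p) →+ V, Function.Injective f := by
  let := AddCommGroup.zmodModule hV
  have : ¬Module.Finite (ZMod p) V := by
    rw [Module.finite_iff_finite]
    exact not_finite_iff_infinite.mpr ‹_›
  obtain ⟨f, hf⟩ := Module.exists_injective_finsupp_nat_of_not_finite this
  let e := (finsuppLEquivDirectSum (ZMod p) (ZMod p) ℕ).symm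
  exact ⟨(f.comp e.toLinearMap).toAddMonoidHom, hf.comp e.injective⟩

theorem isAddTorsion_iff_not_exists_addSubgroup_addEquiv_int {G : Type*} [AddCommGroup G] :
    IsAddTorsion G ↔ ¬∃ A : AddSubgroup G, Nonempty (A ≃+ ℤ) := by
  constructor
  · rintro htor ⟨A, ⟨e⟩⟩
    let f : ℤ →+ G := A.subtype.comp e.symm.toAddMonoidHom
    have hf : Function.Injective f := A.subtype_injective.comp e.symm.injective
    exact not_isOfFinAddOrder_of_isAddTorsionFree one_ne_zero
      (hf.isOfFinAddOrder_iff.mp (htor (f 1)))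
  · intro h g
    by_contra hg
    have hinj : Function.Injective (zmultiplesHom G g) :=
      injective_zsmul_iff_not_isOfFinAddOrder.mpr hg
    exact h ⟨(zmultiplesHom G g).range, ⟨(AddMonoidHom.ofInjective hinj).symm⟩⟩

theorem finite_setOf_nsmul_eq_zero_iff_not_exists_addEquiv_directSum
    {G : Type*} [AddCommGroup G] (p : ℕ) [Fact p.Prime] :
    {x : G | p • x = 0}.Finite ↔
      ¬∃ A : AddSubgroup G, Nonempty (A ≃+ ⨁ _ : ℕ, ZMod p) := by
  constructor
  · rintro hfin ⟨A, ⟨e⟩⟩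
    have hA : (A : Set G) ⊆ {x | p • x = 0} := fun a ha ↦ by
      have : e (p • ⟨a, ha⟩) = e 0 := by
        rw [map_nsmul, map_zero, ZModModule.char_nsmul_eq_zero]
      exact congrArg Subtype.val (e.injective this)
    have hAinf : Infinite A :=
      e.infinite_iff.mpr (DFinsupp.infinite_of_left (π := fun _ : ℕ ↦ ZMod p))
    exact (Set.infinite_coe_iff.mp hAinf).mono hA hfin
  · intro h
    by_contra hinf
    have hcoe : (AddSubgroup.torsionBy G p : Set G) = {x | p • x = 0} :=
      Set.ext fun _ ↦ AddSubgroup.torsionBy.nsmul_iff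
    rw [← hcoe, Set.not_finite, ← Set.infinite_coe_iff] at hinf
    obtain ⟨f, hf⟩ := exists_injective_directSum_zmod_of_nsmul_eq_zero p
      (AddSubgroup.torsionBy.nsmul (A := G) (n := p))
    have hg : Function.Injective ((AddSubgroup.torsionBy G p).subtype.comp f) :=
      Subtype.coe_injective.comp hf
    exact h ⟨_, ⟨(AddMonoidHom.ofInjective hg).symm⟩⟩

/-- `G` is torsion with all `T_p[p]` finite iff `G` has no subgroup
isomorphic to `ℤ` and, for each prime `p`, no subgroup isomorphic to `⨁_{n ∈ ℕ} ℤ/pℤ`. -/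
theorem torsion_finitelyCogenerated_iff_no_subgroups (G : Type*) [AddCommGroup G] :
    (AddMonoid.IsTorsion G ∧
        ∀ (p : ℕ) [Fact p.Prime],
          {x : G | x ∈ AddCommGroup.primaryComponent G p ∧ p • x = 0}.Finite) ↔
      ((¬∃ A : AddSubgroup G, Nonempty (A ≃+ ℤ)) ∧
        ∀ (p : ℕ) [Fact p.Prime],
          ¬∃ A : AddSubgroup G, Nonempty (A ≃+ (⨁ _ : ℕ, ZMod p))) := by
  have primary_socle (p : ℕ) :
      {x : G | x ∈ AddCommGroup.primaryComponent G p ∧ p • x = 0} = {x | p • x = 0} :=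
    Set.ext fun _ ↦ and_iff_right_of_imp fun hx ↦ ⟨1, by rwa [pow_one]⟩
  simp only [primary_socle]
  exact and_congr isAddTorsion_iff_not_exists_addSubgroup_addEquiv_int
    (forall_congr' fun p ↦ forall_congr' fun _ ↦
      finite_setOf_nsmul_eq_zero_iff_not_exists_addEquiv_directSum p)
end

section
/- An abelian group G is a torsion group such that (p·T_p)[p] is finite for every prime p (where T_p is the p-primary component of G) if and only if G has no subgroup isomorphic to ℤ and, for every prime p, no subgroup isomorphic to the countably infinite direct sum ⨁_{n ∈ ℕ} ℤ/p²ℤ. -/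
open scoped TensorProduct DirectSum

/-!
An element of infinite order spans a copy of `ℤ`, so `G` is torsion exactly when `ℤ` does not
embed. For the `p`-part: `S = (p·T_p)[p]` is a vector space over `ZMod p`. An embedding of
`⨁ ℕ, ZMod (p²)` yields the infinitely many distinct elements `p·eₙ` of `S`. Conversely, if `S` is
infinite it has an independent sequence `xₙ`; choosing `yₙ` with `p·yₙ = xₙ`, a relation
`∑ cₙ yₙ = 0` forces first `p ∣ cₙ` (multiply by `p`) and then `p² ∣ cₙ` (divide by `p`), so
`eₙ ↦ yₙ` embeds `⨁ ℕ, ZMod (p²)` into `G`.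
-/

open AddCommGroup

section Embeddings

variable {G D : Type*} [AddGroup G] [AddGroup D]

theorem exists_addSubgroup_addEquiv_iff_exists_injective :
    (∃ A : AddSubgroup G, Nonempty (A ≃+ D)) ↔ ∃ φ : D →+ G, Function.Injective φ := by
  constructor
  · rintro ⟨A, ⟨e⟩⟩
    exact ⟨A.subtype.comp e.symm.toAddMonoidHom, Subtype.coe_injective.comp e.symm.injective⟩
  · rintro ⟨φ, hφ⟩
    exact ⟨φ.range, ⟨(AddMonoidHom.ofInjective hφ).symm⟩⟩

theorem exists_injective_int_iff_not_isAddTorsion :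
    (∃ φ : ℤ →+ G, Function.Injective φ) ↔ ¬IsAddTorsion G := by
  constructor
  · rintro ⟨φ, hφ⟩ htors
    exact not_isOfFinAddOrder_of_isAddTorsionFree one_ne_zero
      ((hφ.isOfFinAddOrder_iff (f := φ)).mp (htors (φ 1)))
  · intro htors
    obtain ⟨g, hg⟩ : ∃ g : G, ¬IsOfFinAddOrder g := by
      simpa [IsAddTorsion] using htors
    exact ⟨zmultiplesHom G g, injective_zsmul_iff_not_isOfFinAddOrder.mpr hg⟩

end Embeddings

theorem exists_linearIndependent_nat_of_infinite (K V : Type*) [DivisionRing K] [Finite K]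
    [AddCommGroup V] [Module K V] [Infinite V] : ∃ x : ℕ → V, LinearIndependent K x := by
  let b := Module.Basis.ofVectorSpace K V
  have : Infinite (Module.Basis.ofVectorSpaceIndex K V) := by
    by_contra hfin
    rw [not_infinite_iff_finite] at hfin
    have := Module.Finite.of_basis b
    have := Module.finite_of_finite K (M := V)
    exact not_finite V
  let e := Infinite.natEmbedding (Module.Basis.ofVectorSpaceIndex K V)
  exact ⟨b ∘ e, b.linearIndependent.comp e e.injective⟩

theorem LinearIndependent.dvd_of_sum_nsmul_eq_zero {ι V : Type*} [AddCommGroup V] {p : ℕ}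
    [Module (ZMod p) V] {x : ι → V} (hx : LinearIndependent (ZMod p) x) {s : Finset ι}
    {c : ι → ℕ} (h : ∑ i ∈ s, c i • x i = 0) : ∀ i ∈ s, p ∣ c i := by
  intro i hi
  rw [← ZMod.natCast_eq_zero_iff]
  refine linearIndependent_iff'.mp hx s (fun i => (c i : ZMod p)) ?_ i hi
  simpa only [Nat.cast_smul_eq_nsmul] using h

section Divisibility

variable {G ι : Type*} [AddCommGroup G]

theorem sq_dvd_of_sum_nsmul_eq_zero {p : ℕ} {y : ι → G}
    (hy : ∀ (s : Finset ι) (c : ι → ℕ), ∑ i ∈ s, c i • p • y i = 0 → ∀ i ∈ s, p ∣ c i)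
    {s : Finset ι} {c : ι → ℕ} (h : ∑ i ∈ s, c i • y i = 0) : ∀ i ∈ s, p ^ 2 ∣ c i := by
  have hp : ∀ i ∈ s, p ∣ c i :=
    hy s c (by simp only [smul_comm _ p, ← Finset.smul_sum, h, smul_zero])
  have hp' : ∀ i ∈ s, p ∣ c i / p := by
    refine hy s (fun i => c i / p) ?_
    rw [← h]
    refine Finset.sum_congr rfl fun i hi => ?_
    rw [smul_smul, Nat.div_mul_cancel (hp i hi)]
  intro i hi
  rw [pow_two, ← Nat.div_mul_cancel (hp i hi)]
  exact mul_dvd_mul_right (hp' i hi) p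

def zmodHomOfNsmulEqZero (n : ℕ) (g : G) (hg : n • g = 0) : ZMod n →+ G :=
  ZMod.lift n ⟨zmultiplesHom G g, by simpa using hg⟩

theorem zmodHomOfNsmulEqZero_apply (n : ℕ) [NeZero n] (g : G) (hg : n • g = 0) (a : ZMod n) :
    zmodHomOfNsmulEqZero n g hg a = a.val • g := by
  have ha : a = ((a.val : ℤ) : ZMod n) := by simp
  nth_rw 1 [ha]
  rw [zmodHomOfNsmulEqZero, ZMod.lift_coe, zmultiplesHom_apply, natCast_zsmul]

theorem exists_injective_directSum_zmod {n : ℕ} [NeZero n] {y : ι → G} (hn : ∀ i, n • y i = 0)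
    (hy : ∀ (s : Finset ι) (c : ι → ℕ), ∑ i ∈ s, c i • y i = 0 → ∀ i ∈ s, n ∣ c i) :
    ∃ φ : (⨁ _ : ι, ZMod n) →+ G, Function.Injective φ := by
  classical
  refine ⟨DirectSum.toAddMonoid fun i => zmodHomOfNsmulEqZero n (y i) (hn i), ?_⟩
  rw [injective_iff_map_eq_zero]
  intro z hz
  have hdvd := hy z.support (fun i => (z i).val) (by
    rw [← hz, DirectSum.toAddMonoid, DFinsupp.liftAddHom_apply, DFinsupp.sumAddHom_apply]
    simp only [DFinsupp.sum, zmodHomOfNsmulEqZero_apply])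
  ext i
  by_cases hi : i ∈ z.support
  · simpa using (ZMod.natCast_eq_zero_iff _ _).mpr (hdvd i hi)
  · exact DFinsupp.notMem_support_iff.mp hi

end Divisibility

/-- `(p·T_p)[p]`, where `T_p` is the `p`-primary component. -/
def smulPrimaryComponentTorsionBy (G : Type*) [AddCommGroup G] (p : ℕ) : AddSubgroup G :=
  (primaryComponent G p).map (nsmulAddMonoidHom p) ⊓ (nsmulAddMonoidHom p).ker

section PrimaryComponent

variable {G : Type*} [AddCommGroup G] {p : ℕ}

theorem mem_smulPrimaryComponentTorsionBy {x : G} :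
    x ∈ smulPrimaryComponentTorsionBy G p ↔
      (∃ y ∈ primaryComponent G p, p • y = x) ∧ p • x = 0 := by
  simp only [smulPrimaryComponentTorsionBy, AddSubgroup.mem_inf, AddSubgroup.mem_map,
    AddMonoidHom.mem_ker, nsmulAddMonoidHom_apply]

theorem coe_smulPrimaryComponentTorsionBy :
    (smulPrimaryComponentTorsionBy G p : Set G) =
      {x : G | (∃ y ∈ primaryComponent G p, p • y = x) ∧ p • x = 0} :=
  Set.ext fun _ => mem_smulPrimaryComponentTorsionBy

theorem infinite_smulPrimaryComponentTorsionBy_of_injective (hp : 1 < p)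
    {φ : (⨁ _ : ℕ, ZMod (p ^ 2)) →+ G} (hφ : Function.Injective φ) :
    (smulPrimaryComponentTorsionBy G p : Set G).Infinite := by
  have hsq : ∀ w : ⨁ _ : ℕ, ZMod (p ^ 2), p ^ 2 • w = 0 := fun w => by
    rw [← Nat.cast_smul_eq_nsmul (ZMod (p ^ 2)), ZMod.natCast_self, zero_smul]
  have hmem : ∀ w, φ (p • w) ∈ smulPrimaryComponentTorsionBy G p := fun w =>
    mem_smulPrimaryComponentTorsionBy.mpr
      ⟨⟨φ w, ⟨2, by rw [← map_nsmul, hsq, map_zero]⟩, (map_nsmul φ p w).symm⟩,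
        by rw [← map_nsmul, smul_smul, ← pow_two, hsq, map_zero]⟩
  have hp0 : (p • 1 : ZMod (p ^ 2)) ≠ 0 := by
    rw [nsmul_one, Ne, ZMod.natCast_eq_zero_iff]
    exact Nat.not_dvd_of_pos_of_lt (by omega) (lt_self_pow₀ hp one_lt_two)
  refine Set.infinite_of_injective_forall_mem (f := fun n => φ (p • DirectSum.of _ n 1))
    (fun m n hmn => ?_) fun n => hmem _
  simp only [← map_nsmul] at hmn
  exact DFinsupp.single_left_injective (fun _ => hp0) (hφ hmn)

theorem exists_injective_of_infinite_smulPrimaryComponentTorsionBy [Fact p.Prime]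
    (h : (smulPrimaryComponentTorsionBy G p : Set G).Infinite) :
    ∃ φ : (⨁ _ : ℕ, ZMod (p ^ 2)) →+ G, Function.Injective φ := by
  let S := smulPrimaryComponentTorsionBy G p
  let _ : Module (ZMod p) S :=
    AddCommGroup.zmodModule fun x => Subtype.ext (mem_smulPrimaryComponentTorsionBy.mp x.2).2
  have : Infinite S := h.to_subtype
  obtain ⟨x, hx⟩ := exists_linearIndependent_nat_of_infinite (ZMod p) S
  choose y _ hy using fun n => (mem_smulPrimaryComponentTorsionBy.mp (x n).2).1
  refine exists_injective_directSum_zmod (y := y) (fun n => ?_) fun s c => ?_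
  · rw [pow_two, mul_smul, hy, (mem_smulPrimaryComponentTorsionBy.mp (x n).2).2]
  refine sq_dvd_of_sum_nsmul_eq_zero fun s c hsum => hx.dvd_of_sum_nsmul_eq_zero ?_
  exact Subtype.ext (by simpa [hy] using hsum)

theorem exists_injective_directSum_zmod_sq_iff [Fact p.Prime] :
    (∃ φ : (⨁ _ : ℕ, ZMod (p ^ 2)) →+ G, Function.Injective φ) ↔
      (smulPrimaryComponentTorsionBy G p : Set G).Infinite :=
  ⟨fun ⟨_, hφ⟩ => infinite_smulPrimaryComponentTorsionBy_of_injective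
    (Fact.out : p.Prime).one_lt hφ, exists_injective_of_infinite_smulPrimaryComponentTorsionBy⟩

end PrimaryComponent

/-- `G` is torsion with all `(p·T_p)[p]` finite iff `G` has no subgroup
isomorphic to `ℤ` and, for each prime `p`, no subgroup isomorphic to `⨁_{n ∈ ℕ} ℤ/p²ℤ`. -/
theorem torsion_pTp_finite_iff_no_subgroups (G : Type*) [AddCommGroup G] :
    (AddMonoid.IsTorsion G ∧
        ∀ (p : ℕ) [Fact p.Prime],
          {x : G | (∃ y ∈ AddCommGroup.primaryComponent G p, p • y = x) ∧
            p • x = 0}.Finite) ↔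
      ((¬∃ A : AddSubgroup G, Nonempty (A ≃+ ℤ)) ∧
        ∀ (p : ℕ) [Fact p.Prime],
          ¬∃ A : AddSubgroup G, Nonempty (A ≃+ (⨁ _ : ℕ, ZMod (p ^ 2)))) := by
  rw [exists_addSubgroup_addEquiv_iff_exists_injective, exists_injective_int_iff_not_isAddTorsion,
    not_not]
  refine and_congr Iff.rfl (forall₂_congr fun p _ => ?_)
  rw [exists_addSubgroup_addEquiv_iff_exists_injective, exists_injective_directSum_zmod_sq_iff,
    coe_smulPrimaryComponentTorsionBy, Set.not_infinite]
end

section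
/- For every prime p, the countably infinite direct sum ⨁_{n ∈ ℕ} ℤ/pℤ is not co-Bassian: there exist a subgroup N of G = ⨁_{n ∈ ℕ} ℤ/pℤ and an injective group homomorphism φ: G → G/N that is not surjective. -/
open scoped TensorProduct DirectSum

/-!
The shift `eₙ ↦ eₙ₊₁` is an injective endomorphism of `⨁_{n ∈ ℕ} ℤ/pℤ` that misses `e₀`.
Composing it with `G ≃ G ⧸ ⊥` gives an injective, non-surjective homomorphism `G → G ⧸ ⊥`.
-/

theorem not_isCoBassian_of_injective_of_not_surjective {G : Type*} [AddCommGroup G]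
    (f : G →+ G) (hinj : Function.Injective f) (hsurj : ¬Function.Surjective f) :
    ¬IsCoBassian G := fun hG =>
  hsurj <| (QuotientAddGroup.quotientBot (G := G)).surjective.comp
    (hG ⊥ (QuotientAddGroup.quotientBot.symm.toAddMonoidHom.comp f)
      (QuotientAddGroup.quotientBot.symm.injective.comp hinj))

namespace DirectSum

variable {κ ι A : Type*} [AddCommMonoid A] [DecidableEq κ] [DecidableEq ι]

def extendAlong (e : κ → ι) : (⨁ _ : κ, A) →+ ⨁ _ : ι, A :=
  toAddMonoid fun k => of (fun _ : ι => A) (e k)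

theorem extendAlong_of (e : κ → ι) (k : κ) (a : A) :
    extendAlong e (of (fun _ : κ => A) k a) = of (fun _ : ι => A) (e k) a :=
  toAddMonoid_of _ _ _

theorem extendAlong_apply_apply {e : κ → ι} (he : Function.Injective e) (x : ⨁ _ : κ, A)
    (k : κ) : extendAlong e x (e k) = x k := by
  induction x using DirectSum.induction_on with
  | zero => simp
  | of i a =>
    rw [extendAlong_of, of_apply, of_apply]
    by_cases hik : i = k
    · subst hik; simp
    · simp [hik, he.ne hik]
  | add x y hx hy => rw [map_add, add_apply, add_apply, hx, hy]

theorem extendAlong_apply_of_notMem_range (e : κ → ι) (x : ⨁ _ : κ, A) {j : ι}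
    (hj : j ∉ Set.range e) : extendAlong e x j = 0 := by
  induction x using DirectSum.induction_on with
  | zero => simp
  | of k a =>
    rw [extendAlong_of, of_apply, dif_neg fun h => hj ⟨k, h⟩]
  | add x y hx hy => rw [map_add, add_apply, hx, hy, add_zero]

theorem extendAlong_injective {e : κ → ι} (he : Function.Injective e) :
    Function.Injective (extendAlong (A := A) e) := fun x y hxy =>
  DFinsupp.ext fun k => by
    rw [← extendAlong_apply_apply he x k, ← extendAlong_apply_apply he y k, hxy]

theorem extendAlong_not_surjective [Nontrivial A] {e : κ → ι}
    (he : ¬Function.Surjective e) : ¬Function.Surjective (extendAlong (A := A) e) := by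
  intro hsurj
  obtain ⟨j, hj⟩ := not_forall.mp he
  obtain ⟨a, ha⟩ := exists_ne (0 : A)
  obtain ⟨x, hx⟩ := hsurj (of (fun _ : ι => A) j a)
  have hxj := extendAlong_apply_of_notMem_range e x (j := j) (by simpa using hj)
  rw [hx, of_eq_same] at hxj
  exact ha hxj

end DirectSum

/-- for every prime `p`, the group `⨁_{n ∈ ℕ} ℤ/pℤ` is not co-Bassian. -/
theorem directSum_zmod_not_coBassian (p : ℕ) (hp : p.Prime) :
    ∃ N : AddSubgroup (⨁ _ : ℕ, ZMod p),
      ∃ φ : (⨁ _ : ℕ, ZMod p) →+ (⨁ _ : ℕ, ZMod p) ⧸ N,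
        Function.Injective φ ∧ ¬Function.Surjective φ := by
  have : Fact (1 < p) := ⟨hp.one_lt⟩
  have hsucc : ¬Function.Surjective Nat.succ := fun h => by
    obtain ⟨n, hn⟩ := h 0
    exact Nat.succ_ne_zero n hn
  have hnot := not_isCoBassian_of_injective_of_not_surjective _
    (DirectSum.extendAlong_injective (A := ZMod p) Nat.succ_injective)
    (DirectSum.extendAlong_not_surjective hsucc)
  simpa [IsCoBassian] using hnot
end

section
/- For every prime p, the group G = ℤ/pℤ ⊕ (⨁_{n ∈ ℕ} ℤ/p²ℤ) is not generalized co-Bassian: there exist a subgroup N of G and an injective group homomorphism φ: G → G/N whose image is not a direct summand of G/N. -/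
open scoped TensorProduct DirectSum

/-!
Let `ψ (a, b) = (0, (p a, b₀, b₁, …))`, an injective endomorphism of
`G = ℤ/p ⊕ ⨁ ℤ/p²`, viewed as a map `G → G/0`. Its image contains `ψ (1, 0) = p • (0, e₀)`,
yet `(1, 0)` is not divisible by `p` in `G`, so the image is not pure in `G`. A direct summand is
always pure: if `n • y ∈ A` and `y = a + c` with `c ∈ C`, then `n • c ∈ A ∩ C = 0`.
-/

theorem IsDirectSummand.exists_nsmul_eq {G : Type*} [AddCommGroup G] {A : AddSubgroup G}
    (hA : IsDirectSummand A) (n : ℕ) {y : G} (hy : n • y ∈ A) : ∃ a ∈ A, n • a = n • y := by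
  obtain ⟨C, hsup, hinf⟩ := hA
  obtain ⟨a, ha, c, hc, rfl⟩ := AddSubgroup.mem_sup.mp (hsup ▸ AddSubgroup.mem_top y)
  have hc' : n • c ∈ A ⊓ C := by
    refine ⟨?_, C.nsmul_mem hc n⟩
    simpa [nsmul_add] using A.sub_mem hy (A.nsmul_mem ha n)
  rw [hinf, AddSubgroup.mem_bot] at hc'
  exact ⟨a, ha, by rw [nsmul_add, hc', add_zero]⟩

theorem not_isDirectSummand_range_of_nsmul_eq {G H : Type*} [AddCommGroup G] [AddCommGroup H]
    {φ : G →+ H} (hφ : Function.Injective φ) {n : ℕ} {y : H} {x : G} (hy : n • y = φ x)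
    (hx : ∀ z, n • z ≠ x) : ¬IsDirectSummand φ.range := fun h => by
  obtain ⟨_, ⟨z, rfl⟩, hz⟩ := h.exists_nsmul_eq n (y := y) (by rw [hy]; exact ⟨x, rfl⟩)
  exact hx z (hφ (by rw [map_nsmul, hz, hy]))

namespace ZMod

theorem injective_of_map_one_ne_zero {p : ℕ} [Fact p.Prime] {M : Type*} [AddCommGroup M]
    (f : ZMod p →+ M) (h1 : f 1 ≠ 0) : Function.Injective f := by
  refine (injective_iff_map_eq_zero f).mpr fun a ha => ?_
  by_contra ha0
  have : (1 : ZMod p) = a⁻¹.val • a := by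
    rw [nsmul_eq_mul, natCast_zmod_val, inv_mul_cancel₀ ha0]
  exact h1 (by rw [this, map_nsmul, ha, smul_zero])

noncomputable def toZModSq (p : ℕ) : ZMod p →+ ZMod (p ^ 2) :=
  lift p ⟨zmultiplesHom _ (p : ZMod (p ^ 2)), by
    rw [zmultiplesHom_apply, natCast_zsmul, nsmul_eq_mul, ← sq, ← Nat.cast_pow, natCast_self]⟩

theorem toZModSq_one (p : ℕ) : toZModSq p 1 = p := by
  rw [toZModSq, ← Int.cast_one, lift_coe]
  exact one_zsmul _

theorem natCast_self_ne_zero_sq {p : ℕ} (hp : 1 < p) : (p : ZMod (p ^ 2)) ≠ 0 := by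
  rw [Ne, natCast_eq_zero_iff]
  nth_rw 2 [← pow_one p]
  rw [Nat.pow_dvd_pow_iff_le_right hp]
  omega

theorem toZModSq_injective (p : ℕ) [Fact p.Prime] : Function.Injective (toZModSq p) :=
  injective_of_map_one_ne_zero _ <|
    toZModSq_one p ▸ natCast_self_ne_zero_sq (Fact.out : p.Prime).one_lt

end ZMod

namespace DirectSum

variable {M : Type*} [AddCommMonoid M]

noncomputable def shift : (⨁ _ : ℕ, M) →+ ⨁ _ : ℕ, M :=
  toAddMonoid fun i => of (fun _ => M) (i + 1)

@[simp]
theorem shift_apply_zero (b : ⨁ _ : ℕ, M) : shift b 0 = 0 := by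
  induction b using DirectSum.induction_on with
  | zero => simp
  | of i x => rw [shift, toAddMonoid_of, of_eq_of_ne _ _ _ (by omega)]
  | add x y hx hy => rw [map_add, add_apply, hx, hy, add_zero]

@[simp]
theorem shift_apply_succ (b : ⨁ _ : ℕ, M) (n : ℕ) : shift b (n + 1) = b n := by
  induction b using DirectSum.induction_on with
  | zero => simp
  | of i x =>
    rw [shift, toAddMonoid_of]
    rcases eq_or_ne i n with rfl | h
    · rw [of_eq_same, of_eq_same]
    · rw [of_eq_of_ne _ _ _ (by omega), of_eq_of_ne _ _ _ h.symm]
  | add x y hx hy => rw [map_add shift x y, add_apply, hx, hy, add_apply]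

noncomputable def cons : M × (⨁ _ : ℕ, M) →+ ⨁ _ : ℕ, M :=
  (of _ 0).coprod shift

theorem cons_apply_zero (m : M) (b : ⨁ _ : ℕ, M) : cons (m, b) 0 = m := by
  simp [cons]

theorem cons_apply_succ (m : M) (b : ⨁ _ : ℕ, M) (n : ℕ) : cons (m, b) (n + 1) = b n := by
  simp [cons, of_eq_of_ne]

theorem cons_injective : Function.Injective (cons : M × (⨁ _ : ℕ, M) → ⨁ _ : ℕ, M) := by
  rintro ⟨m, b⟩ ⟨m', b'⟩ h
  have h0 := congr($h 0)
  rw [cons_apply_zero, cons_apply_zero] at h0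
  refine Prod.ext h0 (DFinsupp.ext fun n => ?_)
  simpa [cons_apply_succ] using congr($h (n + 1))

end DirectSum

open DirectSum

noncomputable def zmodProdDirectSumShift (p : ℕ) :
    ZMod p × (⨁ _ : ℕ, ZMod (p ^ 2)) →+ ZMod p × (⨁ _ : ℕ, ZMod (p ^ 2)) :=
  (AddMonoidHom.inr _ _).comp (cons.comp ((ZMod.toZModSq p).prodMap (AddMonoidHom.id _)))

theorem zmodProdDirectSumShift_injective (p : ℕ) [Fact p.Prime] :
    Function.Injective (zmodProdDirectSumShift p) :=
  (Prod.mk_right_injective 0).comp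
    (cons_injective.comp ((ZMod.toZModSq_injective p).prodMap Function.injective_id))

theorem zmodProdDirectSumShift_one_zero (p : ℕ) :
    zmodProdDirectSumShift p (1, 0) = p • (0, of _ 0 1) := by
  simp [zmodProdDirectSumShift, cons, ZMod.toZModSq_one]

/-- for every prime `p`, the group `ℤ/pℤ ⊕ (⨁_{n ∈ ℕ} ℤ/p²ℤ)` is not
generalized co-Bassian. -/
theorem zmod_prod_directSum_not_genCoBassian (p : ℕ) (hp : p.Prime) :
    ∃ N : AddSubgroup (ZMod p × (⨁ _ : ℕ, ZMod (p ^ 2))),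
      ∃ φ : (ZMod p × (⨁ _ : ℕ, ZMod (p ^ 2))) →+
          (ZMod p × (⨁ _ : ℕ, ZMod (p ^ 2))) ⧸ N,
        Function.Injective φ ∧ ¬IsDirectSummand φ.range := by
  have := Fact.mk hp
  let ι := (QuotientAddGroup.quotientBot (G := ZMod p × (⨁ _ : ℕ, ZMod (p ^ 2)))).symm
  have hφ := ι.injective.comp (zmodProdDirectSumShift_injective p)
  refine ⟨⊥, ι.toAddMonoidHom.comp (zmodProdDirectSumShift p), hφ,
    not_isDirectSummand_range_of_nsmul_eq hφ (n := p) (y := ι (0, of _ 0 1)) (x := (1, 0)) ?_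
      fun z h => ?_⟩
  · rw [← map_nsmul, ← zmodProdDirectSumShift_one_zero]
    rfl
  · have h1 : p • z.1 = 1 := congr(($h).1)
    rw [ZModModule.char_nsmul_eq_zero] at h1
    exact zero_ne_one h1
end
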